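/- (Schur product theorem) If $A$ and $B$ are $n \times n$ positive semidefinite real matrices, then their entrywise (Hadamard) product $A \circ B$, with $(A \circ B)_{ij} = A_{ij} B_{ij}$, is positive semidefinite. -/

import Mathlib

theorem stmt_1 {n : ℕ} (A B : Matrix (Fin n) (Fin n) ℝ)
    (hA : A.PosSemidef) (hB : B.PosSemidef) :
    (Matrix.of fun i j => A i j * B i j).PosSemidef :=
  hA.hadamard hB
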